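/- Let P := exp( Σ_{k≥1} c_{k,k}·z^k ) ∈ ℚ[[z]]. Then P satisfies the linear differential equation 6·P′ = 5·P + 36z²·P″ + 72z·P′, where P′ and P″ denote the first and second formal derivatives. -/

import Mathlib

open PowerSeries Finset

/-- `q : ℕ → ℕ → ℤ` satisfies the defining recursion. -/
def IsQ (q : ℕ → ℕ → ℤ) : Prop :=
  q 0 0 = 1 ∧
  (∀ k j, k < j → q k j = 0) ∧
  (∀ k j, 1 ≤ k → j ≤ k →
    q k j = (2 * (k : ℤ) + 4 * (j : ℤ) - 2) * (if j = 0 then 0 else q (k - 1) (j - 1))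
      + ((j : ℤ) + 1) * q (k - 1) j
      + ∑ m ∈ Finset.range k, ∑ l ∈ Finset.range j, q m l * q (k - 1 - m) (j - 1 - l))

/-- `c : ℕ → ℕ → ℚ` satisfies the defining relations: `c k j = 0` for `j > k`, and
`q k j = (2k+4j)·c k j + (j+1)·c k (j+1)` for all `k ≥ 1` and `0 ≤ j ≤ k`. -/
def IsC (q : ℕ → ℕ → ℤ) (c : ℕ → ℕ → ℚ) : Prop :=
  (∀ k j, k < j → c k j = 0) ∧
  (∀ k j, 1 ≤ k → j ≤ k →
    (q k j : ℚ) = (2 * (k : ℚ) + 4 * (j : ℚ)) * c k j + ((j : ℚ) + 1) * c k (j + 1))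

/-- Composition (substitution) `g(h(z))` of formal power series over `ℚ`; this is the
usual substitution whenever `h` has zero constant term. -/
noncomputable def comp (g h : PowerSeries ℚ) : PowerSeries ℚ :=
  PowerSeries.mk fun n =>
    ∑ k ∈ Finset.range (n + 1), PowerSeries.coeff k g * PowerSeries.coeff n (h ^ k)

/-- The exponential `exp(f)` of a formal power series `f` with zero constant term,
obtained by substituting `f` into the exponential series. -/
noncomputable def expComp (f : PowerSeries ℚ) : PowerSeries ℚ :=
  comp (PowerSeries.exp ℚ) f

/-! Since `q` vanishes above the diagonal, the recursion for `aₖ = q k k` involves only diagonal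
entries, so `A = ∑ aₖ zᵏ` satisfies `A = 1 + z (4A + 6zA' + A²)`. Because
`c k (k+1) = 0`, also `aₖ = 6k·c k k`, i.e. `A = 1 + 6z f'` for `f = ∑ c k k zᵏ`; this turns the
equation for `A` into a Riccati equation for `u = f'`. Finally `P = exp f` gives `P' = uP` and
`P'' = (u' + u²)P`, and the Riccati equation for `u` is the linear equation for `P`. -/

theorem coeff_pow_eq_zero_of_lt {R : Type*} [CommSemiring R] {f : R⟦X⟧}
    (hf : constantCoeff f = 0) {n k : ℕ} (h : n < k) : coeff n (f ^ k) = 0 :=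
  X_pow_dvd_iff.mp (pow_dvd_pow_of_dvd (X_dvd_iff.mpr hf) k) n h

theorem comp_eq_subst (g : ℚ⟦X⟧) {h : ℚ⟦X⟧} (hh : constantCoeff h = 0) :
    comp g h = g.subst h := by
  ext n
  rw [comp, coeff_mk, coeff_subst' (HasSubst.of_constantCoeff_zero' hh)]
  refine (finsum_eq_sum_of_support_subset _ fun k hk => ?_).symm
  rw [coe_range, Set.mem_Iio]
  by_contra! hnk
  exact hk (by simp [coeff_pow_eq_zero_of_lt hh (show n < k by omega)])

theorem derivative_expComp {f : ℚ⟦X⟧} (hf : constantCoeff f = 0) :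
    d⁄dX ℚ (expComp f) = d⁄dX ℚ f * expComp f := by
  rw [expComp, comp_eq_subst _ hf, derivative_subst (HasSubst.of_constantCoeff_zero' hf),
    derivative_exp, mul_comm]

theorem coeff_X_mul_derivative {R : Type*} [CommSemiring R] (f : R⟦X⟧) (n : ℕ) :
    coeff n (X * d⁄dX R f) = n * coeff n f := by
  cases n with
  | zero => simp
  | succ n => rw [coeff_succ_X_mul, coeff_derivative, mul_comm]; push_cast; ring

noncomputable def diagSeries (q : ℕ → ℕ → ℤ) : ℚ⟦X⟧ := mk fun k => (q k k : ℚ)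

namespace IsQ

variable {q : ℕ → ℕ → ℤ}

theorem diag_succ (hq : IsQ q) (k : ℕ) :
    q (k + 1) (k + 1) = (6 * k + 4) * q k k + ∑ m ∈ range (k + 1), q m m * q (k - m) (k - m) := by
  obtain ⟨-, hzero, hrec⟩ := hq
  have hoff : ∀ m ∈ range (k + 1),
      ∑ l ∈ range (k + 1), q m l * q (k - m) (k - l) = q m m * q (k - m) (k - m) := by
    intro m hm
    refine sum_eq_single_of_mem m hm fun l _ hlm => ?_
    rcases lt_or_gt_of_ne hlm with hlt | hgt
    · rw [hzero (k - m) (k - l) (by grind), mul_zero]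
    · rw [hzero m l hgt, zero_mul]
  rw [hrec (k + 1) (k + 1) (by omega) le_rfl, if_neg (by omega)]
  simp only [Nat.add_sub_cancel]
  rw [hzero k (k + 1) (by omega), sum_congr rfl hoff]
  push_cast
  ring

theorem diagSeries_eq_one_add_X_mul (hq : IsQ q) :
    diagSeries q = 1 + X * (4 * diagSeries q + 6 * (X * d⁄dX ℚ (diagSeries q))
      + diagSeries q ^ 2) := by
  ext n
  cases n with
  | zero => simp [diagSeries, hq.1]
  | succ k =>
    rw [map_add, coeff_one, if_neg k.succ_ne_zero, zero_add, coeff_succ_X_mul, map_add, map_add,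
      ← map_ofNat C 4, ← map_ofNat C 6, coeff_C_mul, coeff_C_mul, coeff_X_mul_derivative, sq,
      coeff_mul, Nat.sum_antidiagonal_eq_sum_range_succ_mk]
    simp only [diagSeries, coeff_mk]
    rw [hq.diag_succ]
    push_cast
    ring

end IsQ

noncomputable def cDiagSeries (c : ℕ → ℕ → ℚ) : ℚ⟦X⟧ := mk fun k => if k = 0 then 0 else c k k

theorem constantCoeff_cDiagSeries (c : ℕ → ℕ → ℚ) : constantCoeff (cDiagSeries c) = 0 := by
  rw [← coeff_zero_eq_constantCoeff_apply, cDiagSeries, coeff_mk, if_pos rfl]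

theorem IsC.diagSeries_eq_one_add {q : ℕ → ℕ → ℤ} {c : ℕ → ℕ → ℚ} (hc : IsC q c)
    (hq0 : q 0 0 = 1) : diagSeries q = 1 + 6 * (X * d⁄dX ℚ (cDiagSeries c)) := by
  ext n
  rw [map_add, ← map_ofNat C 6, coeff_C_mul, coeff_X_mul_derivative]
  cases n with
  | zero => simp [diagSeries, hq0]
  | succ k =>
    have hdiag := hc.2 (k + 1) (k + 1) (by omega) le_rfl
    rw [hc.1 (k + 1) (k + 2) (by omega)] at hdiag
    simp only [diagSeries, cDiagSeries, coeff_mk, coeff_one, if_neg k.succ_ne_zero, hdiag]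
    push_cast
    ring

theorem six_mul_eq_of_eq_one_add_X_mul {R : Type*} [CommRing R] [IsDomain R] {A u : R⟦X⟧}
    (hAu : A = 1 + 6 * (X * u))
    (hA : A = 1 + X * (4 * A + 6 * (X * d⁄dX R A) + A ^ 2)) :
    6 * u = 5 + 36 * X ^ 2 * d⁄dX R u + 36 * X ^ 2 * u ^ 2 + 72 * X * u := by
  have hA' : d⁄dX R A = 6 * (u + X * d⁄dX R u) := by
    have h6 : d⁄dX R (6 : R⟦X⟧) = 0 := by exact_mod_cast (d⁄dX R).map_natCast 6
    rw [hAu]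
    simp only [map_add, derivative_one, Derivation.leibniz, h6, derivative_X, smul_eq_mul]
    ring
  refine mul_left_cancel₀ (X_ne_zero (R := R)) ?_
  rw [hA', hAu] at hA
  linear_combination hA

/-- Let `P := exp(∑_{k≥1} c_{k,k} zᵏ) ∈ ℚ⟦z⟧`.  Then `P` satisfies the linear
differential equation `6·P′ = 5·P + 36z²·P″ + 72z·P′`. -/
theorem statement17 (q : ℕ → ℕ → ℤ) (hq : IsQ q) (c : ℕ → ℕ → ℚ) (hc : IsC q c)
    (P : PowerSeries ℚ)
    (hP : P = expComp (PowerSeries.mk fun k => if k = 0 then 0 else c k k)) :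
    6 * d⁄dX ℚ P = 5 * P + 36 * PowerSeries.X ^ 2 * (d⁄dX ℚ (d⁄dX ℚ P)) +
      72 * PowerSeries.X * d⁄dX ℚ P := by
  set u := d⁄dX ℚ (cDiagSeries c)
  have hP' : d⁄dX ℚ P = u * P := by
    rw [hP]
    exact derivative_expComp (constantCoeff_cDiagSeries c)
  have hP'' : d⁄dX ℚ (d⁄dX ℚ P) = (d⁄dX ℚ u + u ^ 2) * P := by
    rw [hP', Derivation.leibniz, hP', smul_eq_mul, smul_eq_mul]
    ring
  have hu := six_mul_eq_of_eq_one_add_X_mul (hc.diagSeries_eq_one_add hq.1)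
    hq.diagSeries_eq_one_add_X_mul
  rw [hP'', hP']
  linear_combination P * hu
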